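/- For every n ≥ 2, the code A_n of Construction 8 is a complete non-cyclic ternary 1-skew-tolerant Gray code of length n that begins with the all-zero word and ends with e_1: it lists all 3^n vectors of (Z/3)^n, consecutive codewords differ by ±1 (mod 3) in exactly one coordinate, and consecutive transition positions differ by at most 1. -/

import Mathlib

/-- Codewords `c` and `d` differ exactly at coordinate `i` (1-based), by `±1` there. -/
def TransAt {m : ℕ} (c d : List (ZMod m)) (i : ℕ) : Prop :=
  1 ≤ i ∧ i ≤ c.length ∧ c.length = d.length ∧
  c.take (i-1) = d.take (i-1) ∧ c.drop i = d.drop i ∧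
  (d.getD (i-1) 0 = c.getD (i-1) 0 + 1 ∨ d.getD (i-1) 0 = c.getD (i-1) 0 - 1)

/-- `C` is a cyclic Gray code with transition sequence `δ`. -/
def CyclicGrayWith {m : ℕ} (C : List (List (ZMod m))) (δ : ℕ → ℕ) : Prop :=
  C.Nodup ∧ ∀ i < C.length,
    TransAt (C.getD i []) (C.getD ((i+1) % C.length) []) (δ i)

/-- `C` is a non-cyclic (path) Gray code with transition sequence `δ`. -/
def PathGrayWith {m : ℕ} (C : List (List (ZMod m))) (δ : ℕ → ℕ) : Prop :=
  C.Nodup ∧ ∀ i, i + 1 < C.length →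
    TransAt (C.getD i []) (C.getD (i+1) []) (δ i)

/-- cyclic `k`-skew-tolerance. -/
def SkewCyc (P : ℕ) (δ : ℕ → ℕ) (k : ℤ) : Prop :=
  ∀ i < P, |(δ i : ℤ) - (δ ((i+1) % P) : ℤ)| ≤ k

/-- non-cyclic `k`-skew-tolerance. -/
def SkewPath (P : ℕ) (δ : ℕ → ℕ) (k : ℤ) : Prop :=
  ∀ i, i + 2 < P → |(δ i : ℤ) - (δ (i+1) : ℤ)| ≤ k

/-- Construction 8, ternary codes `A_n` (`n ≥ 2`). -/
def t8A : ℕ → List (List (ZMod 3))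
  | 0 => [] | 1 => []
  | 2 => [[0,0],[0,1],[0,2],[2,2],[2,0],[2,1],[1,1],[1,2],[1,0]]
  | (n+3) =>
    let P := t8A (n+2)
    let c := P.headI
    let d := P.getLastD []
    let Q := P.tail.dropLast
    [c ++ [0], c ++ [2], c ++ [1]] ++
    Q.map (· ++ [1]) ++ Q.reverse.map (· ++ [0]) ++ Q.map (· ++ [2]) ++
    [d ++ [2], d ++ [1], d ++ [0]]


/-!
The code `A_{n+1}` consists of the words of `A_n` extended by one more coordinate, each in all three
ways; this gives the word lengths, the size `3^n` and completeness by induction, and the absence of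
repetitions by counting.

For the Gray property write `A_n = c :: Q ++ [d]`. The inner words `Q` form a Gray path whose
transition sequence `S` starts and ends with `n`, and `c → Q`, `Q → d` are steps at coordinate `n`.
`A_{n+1}` runs through `Q` forwards, backwards and forwards again, with last coordinate `1`, `0`, `2`,
so that the switches between the three passes are steps at coordinate `n + 1`; its inner transition
sequence is `(n+1, n, S, n+1, reverse S, n+1, S, n, n+1)`. Because `S` begins and ends with `n`,
consecutive transitions still differ by at most one.
-/

section Transitions

variable {m : ℕ} {c d : List (ZMod m)} {i : ℕ}

theorem TransAt.symm (h : TransAt c d i) : TransAt d c i := by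
  obtain ⟨h1, h2, h3, h4, h5, h6⟩ := h
  refine ⟨h1, h3 ▸ h2, h3.symm, h4.symm, h5.symm, ?_⟩
  rcases h6 with h6 | h6
  · exact Or.inr (by rw [h6]; ring)
  · exact Or.inl (by rw [h6]; ring)

theorem TransAt.append (h : TransAt c d i) (u : List (ZMod m)) :
    TransAt (c ++ u) (d ++ u) i := by
  obtain ⟨h1, h2, h3, h4, h5, h6⟩ := h
  refine ⟨h1, by rw [List.length_append]; omega, by simp [h3], ?_, ?_, ?_⟩
  · rw [List.take_append_of_le_length (by omega), List.take_append_of_le_length (by omega), h4]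
  · rw [List.drop_append_of_le_length (by omega), List.drop_append_of_le_length (by omega), h5]
  · rwa [List.getD_append _ _ _ _ (by omega), List.getD_append _ _ _ _ (by omega)]

theorem transAt_concat {w : List (ZMod m)} {n : ℕ} (hw : w.length = n) {x y : ZMod m}
    (h : y = x + 1 ∨ y = x - 1) : TransAt (w ++ [x]) (w ++ [y]) (n + 1) := by
  subst hw
  exact ⟨by omega, by simp, by simp, by simp, by simp, by simpa using h⟩

end Transitions

inductive GrayPath {m : ℕ} : List (List (ZMod m)) → List ℕ → Prop
  | singleton (c : List (ZMod m)) : GrayPath [c] []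
  | cons {c d : List (ZMod m)} {C : List (List (ZMod m))} {i : ℕ} {T : List ℕ} :
      TransAt c d i → GrayPath (d :: C) T → GrayPath (c :: d :: C) (i :: T)

namespace GrayPath

variable {m : ℕ} {C D : List (List (ZMod m))} {T S : List ℕ}

theorem ne_nil (h : GrayPath C T) : C ≠ [] := by
  cases h <;> simp

theorem length_eq (h : GrayPath C T) : C.length = T.length + 1 := by
  induction h with
  | singleton => rfl
  | cons _ _ ih => simp [ih]

theorem append (h₁ : GrayPath C T) (h₂ : GrayPath D S) {i : ℕ}
    (h : ∀ a ∈ C.getLast?, ∀ b ∈ D.head?, TransAt a b i) : GrayPath (C ++ D) (T ++ i :: S) := by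
  induction h₁ with
  | singleton c =>
    cases h₂ with
    | singleton d => exact .cons (h c rfl d rfl) (.singleton d)
    | cons hd hD => exact .cons (h c rfl _ rfl) (.cons hd hD)
  | cons hcd _ ih => exact .cons hcd (ih (by simpa using h))

theorem map_append (h : GrayPath C T) (u : List (ZMod m)) : GrayPath (C.map (· ++ u)) T := by
  induction h with
  | singleton c => exact .singleton _
  | cons hcd _ ih => exact .cons (hcd.append u) ih

theorem reverse (h : GrayPath C T) : GrayPath C.reverse T.reverse := by
  induction h with
  | singleton c => exact .singleton c
  | @cons c d C i T hcd _ ih =>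
    rw [List.reverse_cons (a := c), List.reverse_cons (a := i)]
    exact ih.append (.singleton _) (by simpa using hcd.symm)

theorem transAt_getD (h : GrayPath C T) {j : ℕ} (hj : j + 1 < C.length) :
    TransAt (C.getD j []) (C.getD (j + 1) []) (T.getD j 0) := by
  induction h generalizing j with
  | singleton c => simp at hj
  | cons hcd _ ih =>
    cases j with
    | zero => exact hcd
    | succ j => exact ih (by simpa using hj)

theorem pathGrayWith (h : GrayPath C T) (hC : C.Nodup) : PathGrayWith C (T.getD · 0) :=
  ⟨hC, fun _ hj => h.transAt_getD hj⟩

end GrayPath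

def SkewChain (T : List ℕ) : Prop :=
  T.IsChain fun a b : ℕ => |(a : ℤ) - b| ≤ 1

theorem SkewChain.skewPath {T : List ℕ} (h : SkewChain T) :
    SkewPath (T.length + 1) (T.getD · 0) 1 := by
  intro j hj
  have := List.isChain_iff_getElem.1 h j (by omega)
  simpa [List.getD_eq_getElem?_getD, List.getElem?_eq_getElem (show j < T.length by omega),
    List.getElem?_eq_getElem (show j + 1 < T.length by omega)] using this

theorem List.nodup_of_length_eq_card_pow {α : Type*} [Fintype α] {L : List (List α)} {n : ℕ}
    (hlen : L.length = Fintype.card α ^ n) (hmem : ∀ w : List α, w.length = n → w ∈ L) :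
    L.Nodup := by
  classical
  have hcard : L.length ≤ L.toFinset.card := by
    rw [hlen, ← card_vector, ← Finset.card_univ]
    exact Finset.card_le_card_of_injOn (fun v => v.toList)
      (fun v _ => List.mem_toFinset.2 (hmem _ v.toList_length))
      (fun v _ w _ => List.Vector.eq v w)
  exact Multiset.toFinset_card_eq_card_iff_nodup.1 (le_antisymm (List.toFinset_card_le L) hcard)

-- With `c`, `Q`, `d` the first, inner and last words of `A_n` and `S` the transitions inside `Q`,
-- these are the inner words of `A_{n+1}` and the transitions between them.
def liftInner (c d : List (ZMod 3)) (Q : List (List (ZMod 3))) : List (List (ZMod 3)) :=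
  [c ++ [2], c ++ [1]] ++ Q.map (· ++ [1]) ++ Q.reverse.map (· ++ [0]) ++ Q.map (· ++ [2]) ++
    [d ++ [2], d ++ [1]]

def liftTrans (n : ℕ) (S : List ℕ) : List ℕ :=
  (n + 1) :: n :: S ++ (n + 1) :: S.reverse ++ (n + 1) :: S ++ [n, n + 1]

theorem head?_liftInner (c d : List (ZMod 3)) (Q : List (List (ZMod 3))) :
    (liftInner c d Q).head? = some (c ++ [2]) := rfl

theorem getLast?_liftInner (c d : List (ZMod 3)) (Q : List (List (ZMod 3))) :
    (liftInner c d Q).getLast? = some (d ++ [1]) := by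
  rw [liftInner, List.getLast?_append]
  rfl

theorem length_liftInner (c d : List (ZMod 3)) (Q : List (List (ZMod 3))) :
    (liftInner c d Q).length = 3 * Q.length + 4 := by
  simp only [liftInner, List.length_append, List.length_map, List.length_reverse,
    List.length_cons, List.length_nil]
  ring

theorem head?_liftTrans (n : ℕ) (S : List ℕ) : (liftTrans n S).head? = some (n + 1) := rfl

theorem getLast?_liftTrans (n : ℕ) (S : List ℕ) :
    (liftTrans n S).getLast? = some (n + 1) := by
  rw [liftTrans, List.getLast?_append]
  rfl

theorem GrayPath.liftInner {n : ℕ} {c d : List (ZMod 3)} {Q : List (List (ZMod 3))} {S : List ℕ}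
    (hQ : GrayPath Q S) (hlen : ∀ w ∈ c :: Q ++ [d], w.length = n)
    (hc : ∀ q ∈ Q.head?, TransAt c q n) (hd : ∀ q ∈ Q.getLast?, TransAt q d n) :
    GrayPath (_root_.liftInner c d Q) (liftTrans n S) := by
  obtain ⟨q₀, hq₀⟩ := Option.ne_none_iff_exists'.1 (mt List.head?_eq_none_iff.1 hQ.ne_nil)
  obtain ⟨q₁, hq₁⟩ := Option.ne_none_iff_exists'.1 (mt List.getLast?_eq_none_iff.1 hQ.ne_nil)
  have hq₀len : q₀.length = n := hlen q₀ (by simp [List.mem_of_head? hq₀])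
  have hq₁len : q₁.length = n := hlen q₁ (by simp [List.mem_of_getLast? hq₁])
  refine ((((GrayPath.cons (transAt_concat (hlen c (by simp)) (by decide)) (.singleton _)).append
    (hQ.map_append [1]) ?_).append (hQ.reverse.map_append [0]) ?_).append
    (hQ.map_append [2]) ?_).append
    (.cons (transAt_concat (hlen d (by simp)) (by decide)) (.singleton _)) ?_
  all_goals
    simp only [List.getLast?_append, List.getLast?_map, List.getLast?_reverse, List.head?_map,
      List.head?_reverse, List.head?_cons, List.getLast?_cons_cons, List.getLast?_singleton, hq₀,
      hq₁, Option.map_some, Option.some_or, Option.mem_def, Option.some.injEq, forall_eq']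
  · exact (hc q₀ hq₀).append [1]
  · exact transAt_concat hq₁len (by decide)
  · exact transAt_concat hq₀len (by decide)
  · exact (hd q₁ hq₁).append [2]

theorem SkewChain.liftTrans {n : ℕ} {S : List ℕ} (hS : SkewChain S)
    (hhead : S.head? = some n) (hlast : S.getLast? = some n) :
    SkewChain (liftTrans n S) := by
  have hrev : SkewChain S.reverse :=
    List.isChain_reverse.2 (hS.imp fun a b h => by rwa [abs_sub_comm])
  unfold SkewChain at *
  simp [_root_.liftTrans, List.isChain_append, List.isChain_cons, hS, hrev, hhead, hlast]

-- For `n ≥ 2`, the transitions between the inner words of `t8A n`; the values at `0, 1` are junk.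
def t8AInnerTrans : ℕ → List ℕ
  | 0 | 1 => []
  | 2 => [2, 1, 2, 2, 1, 2]
  | n + 3 => liftTrans (n + 2) (t8AInnerTrans (n + 2))

theorem head?_t8AInnerTrans : ∀ k : ℕ, (t8AInnerTrans (k + 2)).head? = some (k + 2)
  | 0 => rfl
  | _ + 1 => head?_liftTrans _ _

theorem getLast?_t8AInnerTrans : ∀ k : ℕ, (t8AInnerTrans (k + 2)).getLast? = some (k + 2)
  | 0 => rfl
  | _ + 1 => getLast?_liftTrans _ _

theorem skewChain_t8AInnerTrans : ∀ k : ℕ, SkewChain (t8AInnerTrans (k + 2))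
  | 0 => by unfold SkewChain; decide
  | k + 1 => (skewChain_t8AInnerTrans k).liftTrans (head?_t8AInnerTrans k)
      (getLast?_t8AInnerTrans k)

theorem t8A_succ_of_eq {k : ℕ} {c d : List (ZMod 3)} {Q : List (List (ZMod 3))}
    (h : t8A (k + 2) = c :: Q ++ [d]) :
    t8A (k + 3) = (c ++ [0]) :: liftInner c d Q ++ [d ++ [0]] := by
  rw [t8A, h]
  simp [liftInner, List.getLast?_cons]

theorem t8A_eq : ∀ k : ℕ, t8A (k + 2) =
    List.replicate (k + 2) 0 :: (t8A (k + 2)).tail.dropLast ++ [1 :: List.replicate (k + 1) 0]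
  | 0 => rfl
  | k + 1 => by
    rw [t8A_succ_of_eq (t8A_eq k)]
    simp [List.replicate_succ']

theorem mem_t8A_succ {k : ℕ} {c d : List (ZMod 3)} {Q : List (List (ZMod 3))}
    (h : t8A (k + 2) = c :: Q ++ [d]) {w : List (ZMod 3)} :
    w ∈ t8A (k + 3) ↔ ∃ u ∈ t8A (k + 2), ∃ x, w = u ++ [x] := by
  rw [t8A_succ_of_eq h, h]
  simp only [liftInner, List.cons_append, List.nil_append, List.map_reverse, List.append_assoc,
    List.mem_cons, List.mem_append, List.mem_map, List.mem_reverse, List.not_mem_nil, or_false,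
    exists_eq_or_imp, exists_or_eq_imp]
  have hx : ∀ x : ZMod 3, x = 0 ∨ x = 1 ∨ x = 2 := by decide
  constructor
  · rintro (rfl | rfl | rfl | ⟨a, ha, rfl⟩ | ⟨a, ha, rfl⟩ | ⟨a, ha, rfl⟩ | rfl | rfl | rfl) <;>
      simp [*]
  · rintro (⟨x, rfl⟩ | ⟨a, ha, x, rfl⟩ | ⟨x, rfl⟩) <;> rcases hx x with rfl | rfl | rfl <;> simp [*]

theorem length_of_mem_t8A : ∀ (k : ℕ) {w : List (ZMod 3)}, w ∈ t8A (k + 2) → w.length = k + 2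
  | 0, w => by revert w; decide
  | k + 1, _ => fun hw => by
    obtain ⟨u, hu, x, rfl⟩ := (mem_t8A_succ (t8A_eq k)).1 hw
    simp [length_of_mem_t8A k hu]

theorem mem_t8A_of_length : ∀ (k : ℕ) {w : List (ZMod 3)}, w.length = k + 2 → w ∈ t8A (k + 2)
  | 0, [a, b], _ => by revert a b; decide
  | k + 1, w, hw => by
    have hne : w ≠ [] := List.ne_nil_of_length_pos (by omega)
    exact (mem_t8A_succ (t8A_eq k)).2 ⟨w.dropLast, mem_t8A_of_length k (by simp [hw]),
      w.getLast hne, (List.dropLast_append_getLast hne).symm⟩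

theorem length_t8A : ∀ k : ℕ, (t8A (k + 2)).length = 3 ^ (k + 2)
  | 0 => rfl
  | k + 1 => by
    have h := congrArg List.length (t8A_eq k)
    rw [length_t8A k, List.length_append, List.length_cons, List.length_singleton] at h
    rw [t8A_succ_of_eq (t8A_eq k), List.length_append, List.length_cons, length_liftInner,
      List.length_singleton, pow_succ]
    omega

theorem grayPath_t8A_inner : ∀ k : ℕ,
    GrayPath (t8A (k + 2)).tail.dropLast (t8AInnerTrans (k + 2)) ∧
    (∀ q ∈ (t8A (k + 2)).tail.dropLast.head?, TransAt (List.replicate (k + 2) 0) q (k + 2)) ∧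
    (∀ q ∈ (t8A (k + 2)).tail.dropLast.getLast?,
      TransAt q (1 :: List.replicate (k + 1) 0) (k + 2))
  | 0 => by
    refine ⟨?_, by unfold TransAt; decide, by unfold TransAt; decide⟩
    repeat' refine .cons (by unfold TransAt; decide) ?_
    exact .singleton _
  | k + 1 => by
    obtain ⟨hQ, hc, hd⟩ := grayPath_t8A_inner k
    have hinner : (t8A (k + 3)).tail.dropLast =
        liftInner (List.replicate (k + 2) 0) (1 :: List.replicate (k + 1) 0)
          (t8A (k + 2)).tail.dropLast := by
      rw [t8A_succ_of_eq (t8A_eq k), List.cons_append, List.tail_cons, List.dropLast_concat]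
    rw [hinner, head?_liftInner, getLast?_liftInner]
    refine ⟨hQ.liftInner (fun w hw => length_of_mem_t8A k (by rwa [t8A_eq k])) hc hd, ?_, ?_⟩
    all_goals simp only [Option.mem_def, Option.some.injEq, forall_eq']
    · rw [List.replicate_succ']
      exact transAt_concat (by simp) (by decide)
    · rw [List.replicate_succ' (n := k + 1), ← List.cons_append]
      exact transAt_concat (by simp) (by decide)

theorem stmt16 : ∀ n : ℕ, 2 ≤ n →
    (∀ c ∈ t8A n, c.length = n) ∧ (t8A n).length = 3 ^ n ∧
    (∀ c : List (ZMod 3), c.length = n → c ∈ t8A n) ∧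
    (t8A n).getD 0 [] = List.replicate n (0 : ZMod 3) ∧
    (t8A n).getLastD [] = (1 : ZMod 3) :: List.replicate (n-1) 0 ∧
    ∃ δ : ℕ → ℕ, PathGrayWith (t8A n) δ ∧ SkewPath (t8A n).length δ 1 := by
  intro n hn
  obtain ⟨k, rfl⟩ : ∃ k, n = k + 2 := ⟨n - 2, by omega⟩
  obtain ⟨hQ, hc, hd⟩ := grayPath_t8A_inner k
  have hpath : GrayPath (t8A (k + 2)) ((k + 2) :: t8AInnerTrans (k + 2) ++ [k + 2]) := by
    rw [t8A_eq k]
    exact ((GrayPath.singleton _).append hQ (by simpa using hc)).append (.singleton _)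
      (by rw [List.getLast?_append_of_ne_nil _ hQ.ne_nil]; simpa using hd)
  have hskew : SkewChain ((k + 2) :: t8AInnerTrans (k + 2) ++ [k + 2]) := by
    have := skewChain_t8AInnerTrans k
    unfold SkewChain at *
    simp [List.isChain_append, List.isChain_cons, this, head?_t8AInnerTrans,
      getLast?_t8AInnerTrans]
  have hnodup : (t8A (k + 2)).Nodup :=
    List.nodup_of_length_eq_card_pow (by simpa using length_t8A k) fun _ => mem_t8A_of_length k
  refine ⟨fun _ => length_of_mem_t8A k, length_t8A k, fun _ => mem_t8A_of_length k,
    by rw [t8A_eq k]; rfl, by rw [t8A_eq k, List.getLastD_concat]; rfl, _,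
    hpath.pathGrayWith hnodup, ?_⟩
  rw [hpath.length_eq]
  exact hskew.skewPath
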